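/- arXiv:2109.03130 — 2 statements merged into one kernel-verified Lean document; each statement's English description precedes it below -/
import Mathlib

section
/- Let q ≥ 7 be a power of an odd prime and F = 𝔽_q. In the graph R, the number of vertices at graph distance exactly 3 from the line [0,0,0] is r₃([0,0,0]) = q³ − 4q² + 8q − 6. -/
/-- Vertices: points (left component) and lines (right component), each a triple over `F`. -/
abbrev Vtx (F : Type) := (F × F × F) ⊕ (F × F × F)

/-- Adjacency for the graph `Γ_F(p₁ℓ₁, g(p₁,p₂,ℓ₁))`: a point `(p₁,p₂,p₃)` and a line
`[ℓ₁,ℓ₂,ℓ₃]` are adjacent iff `p₂+ℓ₂ = p₁ℓ₁` and `p₃+ℓ₃ = g(p₁,p₂,ℓ₁)`. -/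
def gammaAdj (F : Type) [Field F] (g : F → F → F → F) : Vtx F → Vtx F → Prop
  | Sum.inl p, Sum.inr l => p.2.1 + l.2.1 = p.1 * l.1 ∧ p.2.2 + l.2.2 = g p.1 p.2.1 l.1
  | Sum.inr l, Sum.inl p => p.2.1 + l.2.1 = p.1 * l.1 ∧ p.2.2 + l.2.2 = g p.1 p.2.1 l.1
  | _, _ => False

/-- The bipartite graph `Γ_F(p₁ℓ₁, g(p₁,p₂,ℓ₁))`. -/
def Gamma (F : Type) [Field F] (g : F → F → F → F) : SimpleGraph (Vtx F) where
  Adj := gammaAdj F g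
  symm := by
    constructor
    intro v w h
    match v, w with
    | Sum.inl p, Sum.inr l => exact h
    | Sum.inr l, Sum.inl p => exact h
  loopless := by
    constructor
    intro v h
    match v with
    | Sum.inl p => exact h
    | Sum.inr l => exact h

/-- The graph `R = Γ_F(p₁ℓ₁, p₁p₂ℓ₁(p₁+p₂+p₁p₂))`. -/
def RGraph (F : Type) [Field F] : SimpleGraph (Vtx F) :=
  Gamma F (fun p1 p2 l1 => p1 * p2 * l1 * (p1 + p2 + p1 * p2))

/-!
`R` is bipartite, so a point `x` is at distance 3 from `[0,0,0]` exactly when some walk of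
length 3 reaches it and it is not a neighbour. Writing `c(a,b) = ab(a+b+ab)` (`rCoeff`),
the walks `[0,0,0] – (a,0,0) – [ℓ,aℓ,0] – x` exist iff `x₃ = c(x₁,x₂)ℓ` with `ℓ ≠ 0` unless
`x₂ = 0`, i.e. iff `c(x₁,x₂)` and `x₃` vanish together. Since `c` vanishes on the `3q - 3`
pairs with `a = 0`, `b = 0` or `(1+a)(1+b) = 1`, the count is
`(q² - 3q + 3)(q - 1) + (2q - 3)`.
-/

namespace SimpleGraph

variable {V : Type*} {G : SimpleGraph V}

theorem Walk.exists_length_eq_add_one_iff {u v : V} {n : ℕ} :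
    (∃ p : G.Walk u v, p.length = n + 1) ↔
      ∃ w, G.Adj u w ∧ ∃ p : G.Walk w v, p.length = n := by
  constructor
  · rintro ⟨_ | ⟨h, p⟩, hp⟩
    · simp at hp
    · exact ⟨_, h, p, by simpa using hp⟩
  · rintro ⟨w, h, p, rfl⟩
    exact ⟨.cons h p, rfl⟩

theorem Walk.exists_length_eq_three_iff {u v : V} :
    (∃ p : G.Walk u v, p.length = 3) ↔ ∃ w w', G.Adj u w ∧ G.Adj w w' ∧ G.Adj w' v := by
  simp only [exists_length_eq_add_one_iff, exists_length_eq_zero_iff, exists_eq_right]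
  grind

theorem Coloring.dist_eq_three_iff (c : G.Coloring Bool) {u v : V} :
    G.dist u v = 3 ↔ (∃ p : G.Walk u v, p.length = 3) ∧ ¬G.Adj u v := by
  rw [← dist_eq_one_iff_adj]
  refine ⟨fun h => ⟨h ▸ exists_walk_of_dist_ne_zero (by omega), by omega⟩, ?_⟩
  rintro ⟨⟨p, hp⟩, hne⟩
  obtain ⟨q, hq⟩ := Reachable.exists_walk_length_eq_dist ⟨p⟩
  have hodd : Odd q.length := by
    rw [c.odd_length_iff_not_congr, ← c.odd_length_iff_not_congr p, hp]
    decide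
  have hle := dist_le p
  rw [hq] at hodd
  obtain ⟨k, hk⟩ := hodd
  omega

end SimpleGraph

section RGraphDistance

open SimpleGraph

variable {F : Type} [Field F]

def gammaColoring (g : F → F → F → F) : (Gamma F g).Coloring Bool :=
  Coloring.mk Sum.isLeft <| by
    rintro (p | l) (p' | l') h <;> first | exact (h : False).elim | simp

def rCoeff (a b : F) : F := a * b * (a + b + a * b)

@[simp] lemma rCoeff_zero_right (a : F) : rCoeff a 0 = 0 := by simp [rCoeff]

namespace RGraph

@[simp] lemma adj_inl_inr (p l : F × F × F) :
    (RGraph F).Adj (.inl p) (.inr l) ↔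
      p.2.1 + l.2.1 = p.1 * l.1 ∧ p.2.2 + l.2.2 = rCoeff p.1 p.2.1 * l.1 := by
  rw [rCoeff, mul_right_comm (p.1 * p.2.1)]; rfl

@[simp] lemma adj_inr_inl (l p : F × F × F) :
    (RGraph F).Adj (.inr l) (.inl p) ↔
      p.2.1 + l.2.1 = p.1 * l.1 ∧ p.2.2 + l.2.2 = rCoeff p.1 p.2.1 * l.1 :=
  adj_inl_inr p l

@[simp] lemma not_adj_inl_inl (p p' : F × F × F) : ¬(RGraph F).Adj (.inl p) (.inl p') := id

@[simp] lemma not_adj_inr_inr (l l' : F × F × F) : ¬(RGraph F).Adj (.inr l) (.inr l') := id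

lemma exists_walk_three_iff (a b t : F) :
    (∃ p : (RGraph F).Walk (.inr (0, 0, 0)) (.inl (a, b, t)), p.length = 3) ↔
      (rCoeff a b = 0 ↔ t = 0) := by
  rw [Walk.exists_length_eq_three_iff]
  simp only [exists_and_left, Sum.exists, not_adj_inl_inl, and_false, exists_const, adj_inr_inl,
    Prod.exists, false_or, add_zero, mul_zero, adj_inl_inr, ↓existsAndEq, and_true, zero_add,
    exists_eq_left, rCoeff_zero_right, zero_mul, not_adj_inr_inr, false_and, and_self, or_false]
  constructor
  · rintro ⟨a', l, hb, rfl⟩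
    refine ⟨fun h => by simp [h], fun h => ?_⟩
    rcases mul_eq_zero.mp h with h | rfl
    · exact h
    · simp only [mul_zero, add_zero] at hb
      simp [hb]
  · intro h
    by_cases hc : rCoeff a b = 0
    · exact ⟨a - b, 1, by ring, by simp [hc, h.mp hc]⟩
    · have ht : t ≠ 0 := mt h.mpr hc
      exact ⟨a - b * rCoeff a b / t, t / rCoeff a b, by field_simp; ring, by field_simp⟩

def coloring : (RGraph F).Coloring Bool := gammaColoring _

lemma setOf_dist_eq_three :
    {v : Vtx F | (RGraph F).dist (.inr (0, 0, 0)) v = 3} =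
      Sum.inl '' {x : F × F × F |
        (rCoeff x.1 x.2.1 = 0 ↔ x.2.2 = 0) ∧ ¬(x.2.1 = 0 ∧ x.2.2 = 0)} := by
  ext (⟨a, b, t⟩ | l)
  · simp [coloring.dist_eq_three_iff, exists_walk_three_iff]
  · simp only [Set.mem_ofPred_eq, Set.mem_image, reduceCtorEq, and_false, exists_false, iff_false,
      coloring.dist_eq_three_iff]
    rintro ⟨⟨p, hp⟩, -⟩
    exact absurd ((coloring.even_length_iff_congr p).mpr Iff.rfl) (hp ▸ by decide)

end RGraph

end RGraphDistance

section Counting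

open Finset

lemma Finset.card_filter_prod_prod {α β γ : Type*} [Fintype α] [Fintype β] [Fintype γ]
    (p : α × β × γ → Prop) [DecidablePred p] :
    #{x | p x} = ∑ ab : α × β, #{c | p (ab.1, ab.2, c)} := by
  simp only [card_filter, Fintype.sum_prod_type]

variable {F : Type} [Field F] [Fintype F] [DecidableEq F]

lemma card_rCoeff_eq_zero_and_ne_zero :
    (#{ab : F × F | rCoeff ab.1 ab.2 = 0 ∧ ab.2 ≠ 0} : ℤ) = 2 * Fintype.card F - 3 := by
  -- for `a ≠ 0` the equation is `(1 + a)(1 + b) = 1`, parametrized by `u = 1 + a`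
  have hsplit : ({ab : F × F | rCoeff ab.1 ab.2 = 0 ∧ ab.2 ≠ 0} : Finset _) =
      (univ.erase 0).image (fun b => (0, b)) ∪
        ((univ.erase 0).erase 1).image (fun u => (u - 1, u⁻¹ - 1)) := by
    ext ⟨a, b⟩
    simp only [mem_filter, mem_univ, true_and, mem_union, mem_image, mem_erase, and_true,
      Prod.mk.injEq]
    constructor
    · rintro ⟨hc, hb⟩
      by_cases ha : a = 0
      · exact Or.inl ⟨b, hb, ha.symm, rfl⟩
      · have hs : a + b + a * b = 0 := by simpa [rCoeff, ha, hb] using hc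
        have h1a : 1 + a ≠ 0 := fun h =>
          one_ne_zero (α := F) (by linear_combination (1 + b) * h - hs)
        refine Or.inr ⟨1 + a, ⟨by simpa using ha, h1a⟩, by ring, ?_⟩
        field_simp
        linear_combination -hs
    · rintro (⟨b, hb, rfl, rfl⟩ | ⟨u, ⟨hu1, hu0⟩, rfl, rfl⟩)
      · simp [rCoeff, hb]
      · refine ⟨?_, by simp [sub_eq_zero, hu1]⟩
        simp only [rCoeff]
        field_simp
        ring
  have hdisj : Disjoint ((univ.erase (0 : F)).image (fun b => (0, b)))
      (((univ.erase 0).erase 1).image (fun u => (u - 1, u⁻¹ - 1))) := by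
    rw [Finset.disjoint_left]
    simp only [mem_image, mem_erase, mem_univ, and_true, not_exists, not_and]
    rintro _ ⟨b, -, rfl⟩ u ⟨hu1, -⟩ h
    exact hu1 (sub_eq_zero.mp (congrArg Prod.fst h))
  rw [hsplit, card_union_of_disjoint hdisj,
    card_image_of_injective _ (Prod.mk_right_injective 0),
    card_image_of_injective _ fun u v h => by simpa using congrArg Prod.fst h,
    card_erase_of_mem (mem_erase.2 ⟨one_ne_zero, mem_univ _⟩), card_erase_of_mem (mem_univ _),
    card_univ]
  have := Fintype.one_lt_card (α := F)
  omega

lemma card_rCoeff_eq_zero :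
    (#{ab : F × F | rCoeff ab.1 ab.2 = 0} : ℤ) = 3 * Fintype.card F - 3 := by
  have hb0 : ({ab : F × F | rCoeff ab.1 ab.2 = 0 ∧ ab.2 = 0} : Finset _) = univ ×ˢ {0} := by
    ext ⟨a, b⟩
    simp only [mem_filter, mem_univ, true_and, mem_product, mem_singleton]
    exact ⟨And.right, fun hb => ⟨hb ▸ rCoeff_zero_right a, hb⟩⟩
  rw [← card_filter_add_card_filter_not (fun ab : F × F => ab.2 = 0), filter_filter,
    filter_filter, hb0, Nat.cast_add, card_rCoeff_eq_zero_and_ne_zero]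
  simp only [card_product, card_univ, card_singleton, mul_one]
  ring

lemma card_third_coord (a b : F) :
    (#{t : F | (rCoeff a b = 0 ↔ t = 0) ∧ ¬(b = 0 ∧ t = 0)} : ℤ) =
      if rCoeff a b = 0 then (if b ≠ 0 then 1 else 0) else (Fintype.card F : ℤ) - 1 := by
  by_cases hc : rCoeff a b = 0
  · by_cases hb : b = 0 <;> simp [hc, hb, filter_eq']
  · have hb : b ≠ 0 := by rintro rfl; simp at hc
    simp [hc, hb, filter_ne', Nat.cast_pred Fintype.card_pos]

lemma card_dist_three_points :
    (#{x : F × F × F | (rCoeff x.1 x.2.1 = 0 ↔ x.2.2 = 0) ∧ ¬(x.2.1 = 0 ∧ x.2.2 = 0)} : ℤ) =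
      (Fintype.card F : ℤ) ^ 3 - 4 * Fintype.card F ^ 2 + 8 * Fintype.card F - 6 := by
  rw [card_filter_prod_prod, Nat.cast_sum]
  simp only [card_third_coord]
  rw [sum_ite, sum_boole, sum_const, filter_filter, card_rCoeff_eq_zero_and_ne_zero,
    nsmul_eq_mul]
  have hcompl := congrArg (Nat.cast (R := ℤ)) <| card_filter_add_card_filter_not
    (s := (univ : Finset (F × F))) (fun ab => rCoeff ab.1 ab.2 = 0)
  rw [Nat.cast_add, card_rCoeff_eq_zero, card_univ, Fintype.card_prod, Nat.cast_mul] at hcompl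
  linear_combination (↑(Fintype.card F) - 1 : ℤ) * hcompl

end Counting

theorem r3_line_000_general (q : ℕ) (F : Type) [Field F] [Fintype F] (hcard : Fintype.card F = q) :
    (Set.ncard {w : Vtx F | (RGraph F).dist (Sum.inr (0, 0, 0)) w = 3} : ℤ) =
      (q : ℤ) ^ 3 - 4 * (q : ℤ) ^ 2 + 8 * (q : ℤ) - 6 := by
  classical
  rw [RGraph.setOf_dist_eq_three, Set.ncard_image_of_injective _ Sum.inl_injective,
    Set.ncard_eq_toFinset_card', Set.toFinset_ofPred, card_dist_three_points, hcard]

/-- Let `q ≥ 7` be a power of an odd prime and `F = 𝔽_q`. In the graph `R`, the number of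
vertices at graph distance exactly 3 from the line `[0,0,0]` is `q³ − 4q² + 8q − 6`. -/
theorem r3_line_000 (q p e : ℕ) (hp : p.Prime) (hodd : Odd p) (he : 1 ≤ e) (hq : q = p ^ e)
    (h7 : 7 ≤ q) (F : Type) [Field F] [Fintype F] (hcard : Fintype.card F = q) :
    (Set.ncard {w : Vtx F | (RGraph F).dist (Sum.inr (0, 0, 0)) w = 3} : ℤ) =
      (q : ℤ) ^ 3 - 4 * (q : ℤ) ^ 2 + 8 * (q : ℤ) - 6 :=
  r3_line_000_general q F hcard
end

section
/- Let q be a power of an odd prime with q ≡ 1 (mod 3) and F = 𝔽_q, and let φ be an automorphism of the graph R that maps lines to lines and such that for every line the second component of its image under φ equals its own second component. Then there exists b ∈ F such that φ = t_b, i.e., φ((p₁,p₂,p₃)) = (p₁,p₂,p₃+b) for every point and φ([ℓ₁,ℓ₂,ℓ₃]) = [ℓ₁,ℓ₂,ℓ₃−b] for every line. -/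
open Polynomial

namespace FiniteField

variable {K : Type*} [Field K] [Fintype K]

theorem sum_pow_card_sub_one : ∑ x : K, x ^ (Fintype.card K - 1) = -1 := by
  classical
  have hq : 1 < Fintype.card K := Fintype.one_lt_card
  rw [← Finset.add_sum_erase _ _ (Finset.mem_univ 0), zero_pow (by omega), zero_add,
    Finset.sum_congr rfl fun x hx => pow_card_sub_one_eq_one x (Finset.ne_of_mem_erase hx),
    Finset.sum_const, Finset.card_erase_of_mem (Finset.mem_univ _), Finset.card_univ,
    nsmul_one, Nat.cast_pred (by omega), cast_card_eq_zero, zero_sub]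

theorem sum_eval_eq_neg_coeff {P : K[X]} (hP : P.natDegree < Fintype.card K) :
    ∑ x : K, P.eval x = -P.coeff (Fintype.card K - 1) := by
  have hq : 1 < Fintype.card K := Fintype.one_lt_card
  have hterm : ∀ i ∈ Finset.range (Fintype.card K),
      ∑ x : K, P.coeff i * x ^ i = if i = Fintype.card K - 1 then -P.coeff i else 0 := by
    intro i hi
    rw [← Finset.mul_sum]
    split_ifs with h
    · rw [h, sum_pow_card_sub_one, mul_neg_one]
    · rw [sum_pow_lt_card_sub_one K i (by rw [Finset.mem_range] at hi; omega), mul_zero]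
  simp_rw [eval_eq_sum_range' hP]
  rw [Finset.sum_comm, Finset.sum_congr rfl hterm, Finset.sum_ite_eq',
    if_pos (Finset.mem_range.mpr (by omega))]

end FiniteField

theorem Equiv.exists_apply_inl_eq_inl {α β : Type*} [Finite β] (e : α ⊕ β ≃ α ⊕ β)
    (h : ∀ b, ∃ b', e (.inr b) = .inr b') (a : α) : ∃ a', e (.inl a) = .inl a' := by
  choose g hg using h
  have hg_inj : g.Injective := fun b b' hb =>
    Sum.inr_injective (e.injective (by rw [hg, hg, hb]))
  rcases he : e (.inl a) with a' | b'
  · exact ⟨a', rfl⟩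
  · obtain ⟨b, rfl⟩ := Finite.injective_iff_surjective.mp hg_inj b'
    exact absurd (e.injective (he.trans (hg b).symm)) Sum.inl_ne_inr

theorem exists_affine_of_affine_along_lines {K : Type*} [Field K] {t : K} (ht₀ : t ≠ 0)
    (ht₁ : t ≠ 1) (ρ : K → K → K) (h : ∀ c s : K, ∃ A B : K, ∀ a, ρ a (c * a + s) = A * a + B) :
    ∃ β μ ν : K, ∀ a y, ρ a y = β * a + μ * y + ν := by
  choose A B hAB using h
  -- `ρ a y = A 0 y * a + B 0 y`; the lines `y = a`, `y = a + 1` make `A 0` affine, and along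
  -- `y = t a` the resulting `a ^ 2` term must vanish, which kills the slope of `A 0`
  have hρ (a y : K) : ρ a y = A 0 y * a + B 0 y := by simpa using hAB 0 y a
  have hdiag (z : K) : ρ z z = A 1 0 * z + B 1 0 := by simpa using hAB 1 0 z
  have hw (z : K) : A 0 z = (A 1 0 - A 1 1) * z + (B 1 0 - B 1 1 + A 1 1) := by
    have h1 := hAB 1 1 (z - 1)
    rw [show (1 : K) * (z - 1) + 1 = z by ring, hρ] at h1
    have h0 := hdiag z
    rw [hρ] at h0
    linear_combination h0 - h1
  have hquad (a : K) : (A 1 0 - A 1 1) * t * (1 - t) * a ^ 2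
      + ((1 - t) * (B 1 0 - B 1 1 + A 1 1) + A 1 0 * t - A t 0) * a + (B 1 0 - B t 0) = 0 := by
    have h1 := hAB t 0 a
    have h0 := hdiag (t * a)
    rw [add_zero, hρ] at h1
    rw [hρ] at h0
    linear_combination h1 - h0 - (1 - t) * a * hw (t * a)
  have hslope : A 1 0 - A 1 1 = 0 := by
    have h : (A 1 0 - A 1 1) * (t ^ 2 * (1 - t) ^ 2) = 0 := by
      linear_combination -hquad t + t * hquad 1 - (t - 1) * hquad 0
    have ht : t ^ 2 * (1 - t) ^ 2 ≠ 0 := by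
      have : 1 - t ≠ 0 := sub_ne_zero.mpr ht₁.symm
      positivity
    exact (mul_eq_zero.mp h).resolve_right ht
  refine ⟨B 1 0 - B 1 1 + A 1 1, A 1 0 - (B 1 0 - B 1 1 + A 1 1), B 1 0, fun a y => ?_⟩
  have h0 := hdiag y
  rw [hρ, hw, hslope] at h0
  rw [hρ, hw, hslope]
  linear_combination h0

namespace RGraph

variable {F : Type} [Field F]

-- the `h(p₁, p₂)` of `p₁ p₂ ℓ₁ (p₁ + p₂ + p₁ p₂) = p₁ ℓ₁ h(p₁, p₂)`
def pointSlope (u v : F) : F := v * (u + v + u * v)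

structure Incident (p l : F × F × F) : Prop where
  snd : p.2.1 + l.2.1 = p.1 * l.1
  thd : p.2.2 + l.2.2 = (p.2.1 + l.2.1) * pointSlope p.1 p.2.1

theorem adj_inl_inr_iff {p l : F × F × F} :
    (RGraph F).Adj (.inl p) (.inr l) ↔ Incident p l := by
  change _ ∧ _ ↔ _
  constructor
  · rintro ⟨h₁, h₂⟩
    exact ⟨h₁, by rw [h₁, pointSlope]; linear_combination h₂⟩
  · rintro ⟨h₁, h₂⟩
    exact ⟨h₁, by rw [h₁, pointSlope] at h₂; linear_combination h₂⟩

theorem incident_neg_of_mul_eq_zero {u x : F} (a r : F) (h : u * x = 0) :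
    Incident (u, -a, -r) (x, a, r) :=
  ⟨by simp [h], by simp⟩

namespace Incident

variable {p p' l l' : F × F × F}

theorem thd_eq_of_snd_eq (h : Incident p l) (h' : Incident p l') (hl : l.2.1 = l'.2.1) :
    l.2.2 = l'.2.2 := by
  linear_combination h.thd - h'.thd + pointSlope p.1 p.2.1 * hl

theorem fst_eq_zero (h : Incident p l) (h' : Incident p l') (hl : l.2.1 = l'.2.1)
    (hne : l.1 ≠ l'.1) : p.1 = 0 := by
  have : p.1 * (l.1 - l'.1) = 0 := by linear_combination h'.snd - h.snd + hl
  exact (mul_eq_zero.mp this).resolve_right (sub_ne_zero.mpr hne)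

theorem eq_of_fst_eq (h : Incident p l) (h' : Incident p' l) (hp : p.1 = p'.1) : p = p' := by
  have h₂ : p.2.1 = p'.2.1 := by linear_combination h.snd - h'.snd + l.1 * hp
  have h₃ : p.2.2 = p'.2.2 := by
    have hs : pointSlope p.1 p.2.1 = pointSlope p'.1 p'.2.1 := by rw [hp, h₂]
    linear_combination h.thd - h'.thd + (p.2.1 + l.2.1) * hs + pointSlope p'.1 p'.2.1 * h₂
  exact Prod.ext hp (Prod.ext h₂ h₃)

end Incident

theorem pointSlope_left_injective {u u' v : F} (hv₀ : v ≠ 0) (hv₁ : v ≠ -1)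
    (h : pointSlope u v = pointSlope u' v) : u = u' := by
  have : (v * (1 + v)) * (u - u') = 0 := by unfold pointSlope at h; linear_combination h
  have hv : v * (1 + v) ≠ 0 := mul_ne_zero hv₀ fun h => hv₁ (by linear_combination h)
  exact sub_eq_zero.mp ((mul_eq_zero.mp this).resolve_left hv)

theorem exists_pointSlope_eq [Fintype F] (hF : 4 < Fintype.card F) (c : F) :
    ∃ u v : F, u ≠ 0 ∧ pointSlope u v = c := by
  classical
  obtain ⟨v, -, hv⟩ := Finset.exists_mem_notMem_of_card_lt_card
    (s := {0, -1} ∪ (X ^ 2 - C c).roots.toFinset) (t := Finset.univ) <| by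
      have h₁ : ({0, -1} : Finset F).card ≤ 2 := Finset.card_le_two
      have h₂ : (X ^ 2 - C c).roots.toFinset.card ≤ 2 :=
        (Multiset.toFinset_card_le _).trans ((card_roots' _).trans natDegree_X_pow_sub_C.le)
      have := Finset.card_union_le {(0 : F), -1} (X ^ 2 - C c).roots.toFinset
      rw [Finset.card_univ]
      omega
  simp only [Finset.mem_union, Finset.mem_insert, Finset.mem_singleton, Multiset.mem_toFinset,
    mem_roots (X_pow_sub_C_ne_zero two_pos c), IsRoot.def, eval_sub, eval_pow, eval_X, eval_C,
    sub_eq_zero, not_or] at hv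
  obtain ⟨⟨hv₀, hv₁⟩, hvc⟩ := hv
  have hv₁' : 1 + v ≠ 0 := fun h => hv₁ (by linear_combination h)
  have hden : v * (1 + v) ≠ 0 := mul_ne_zero hv₀ hv₁'
  refine ⟨(c - v ^ 2) / (v * (1 + v)), v, div_ne_zero (sub_ne_zero.mpr (Ne.symm hvc)) hden, ?_⟩
  unfold pointSlope
  field_simp
  ring

theorem exists_poly_eval_eq_pointSlope (x a : F) : ∃ P : F[X],
    P.natDegree ≤ 3 ∧ P.coeff 3 = x ^ 2 ∧ ∀ T, P.eval T = pointSlope T (T * x - a) :=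
  ⟨C (x ^ 2) * X ^ 3 + C (x * (1 + x - 2 * a)) * X ^ 2 + C (-(a * (1 + 2 * x - a))) * X
      + C (a ^ 2), by compute_degree,
    by simp only [coeff_add, coeff_C_mul, coeff_X_pow, coeff_X, coeff_C]; norm_num,
    fun T => by simp [pointSlope]; ring⟩

section

variable [Fintype F] (x a : F) {j : ℕ}

theorem sum_pointSlope_pow_of_lt (hj : 3 * j < Fintype.card F - 1) :
    ∑ T : F, pointSlope T (T * x - a) ^ j = 0 := by
  obtain ⟨P, hdeg, -, hP⟩ := exists_poly_eval_eq_pointSlope x a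
  have hdeg' := natDegree_pow_le_of_le j hdeg
  simp_rw [← hP, ← eval_pow]
  rw [FiniteField.sum_eval_eq_neg_coeff (P := P ^ j) (by omega),
    coeff_eq_zero_of_natDegree_lt (by omega), neg_zero]

theorem sum_pointSlope_pow_of_eq (hj : 3 * j = Fintype.card F - 1) :
    ∑ T : F, pointSlope T (T * x - a) ^ j = -x ^ (2 * j) := by
  obtain ⟨P, hdeg, hcoeff, hP⟩ := exists_poly_eval_eq_pointSlope x a
  have hdeg' := natDegree_pow_le_of_le j hdeg
  have := Fintype.card_pos (α := F)
  simp_rw [← hP, ← eval_pow]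
  rw [FiniteField.sum_eval_eq_neg_coeff (P := P ^ j) (by omega), ← hj, mul_comm,
    coeff_pow_of_natDegree_le hdeg, hcoeff, ← pow_mul]

end

structure IncidenceMap (F : Type) [Field F] where
  point : F × F × F → F × F × F
  line : F × F × F → F × F × F
  point_injective : Function.Injective point
  line_injective : Function.Injective line
  snd_line (l : F × F × F) : (line l).2.1 = l.2.1
  incident {p l : F × F × F} : Incident p l → Incident (point p) (line l)

namespace IncidenceMap

variable (f : IncidenceMap F)

theorem thd_line_eq (x a r : F) : (f.line (x, a, r)).2.2 = (f.line (0, a, r)).2.2 :=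
  (f.incident (incident_neg_of_mul_eq_zero a r (zero_mul x))).thd_eq_of_snd_eq
    (f.incident (incident_neg_of_mul_eq_zero a r (zero_mul 0)))
    (by rw [snd_line, snd_line])

theorem fst_line_injective (a r : F) : Function.Injective fun x => (f.line (x, a, r)).1 :=
  fun x x' h => congrArg Prod.fst <| f.line_injective <|
    Prod.ext h (Prod.ext (by rw [snd_line, snd_line]) (by rw [thd_line_eq, f.thd_line_eq x']))

theorem point_of_fst_eq_zero (v w : F) :
    (f.point (0, v, w)).1 = 0 ∧ (f.point (0, v, w)).2.1 = v := by
  have h (x : F) := f.incident (p := (0, v, w)) (l := (x, -v, -w)) ⟨by simp, by simp⟩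
  have h₀ := (h 0).fst_eq_zero (h 1) (by rw [snd_line, snd_line])
    ((f.fst_line_injective _ _).ne zero_ne_one)
  refine ⟨h₀, ?_⟩
  have := (h 0).snd
  rw [h₀, zero_mul, snd_line] at this
  linear_combination this

theorem thd_line_zero_eq {p : F × F × F} (hp : p.1 ≠ 0) (a : F) :
    (f.line (0, a, (a + p.2.1) * pointSlope p.1 p.2.1 - p.2.2)).2.2 =
      ((f.point p).2.1 + a) * pointSlope (f.point p).1 (f.point p).2.1 - (f.point p).2.2 := by
  have h := (f.incident (p := p) (l := ((a + p.2.1) / p.1, a,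
    (a + p.2.1) * pointSlope p.1 p.2.1 - p.2.2)) ⟨by field_simp; ring, by ring⟩).thd
  rw [snd_line, thd_line_eq] at h
  linear_combination h

theorem exists_thd_line_eq_affine [Fintype F] (hF : 4 < Fintype.card F) :
    ∃ β μ ν : F, ∀ l, (f.line l).2.2 = β * l.2.1 + μ * l.2.2 + ν := by
  classical
  obtain ⟨t, -, ht⟩ := Finset.exists_mem_notMem_of_card_lt_card
    (s := ({0, 1} : Finset F)) (t := Finset.univ)
    (Finset.card_le_two.trans_lt (by rw [Finset.card_univ]; omega))
  simp only [Finset.mem_insert, Finset.mem_singleton, not_or] at ht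
  have hlines (c s : F) : ∃ A B : F, ∀ a, (f.line (0, a, c * a + s)).2.2 = A * a + B := by
    obtain ⟨u, v, hu, hc⟩ := exists_pointSlope_eq hF c
    set P := f.point (u, v, c * v - s)
    refine ⟨pointSlope P.1 P.2.1, P.2.1 * pointSlope P.1 P.2.1 - P.2.2, fun a => ?_⟩
    have h := f.thd_line_zero_eq (p := (u, v, c * v - s)) hu a
    dsimp only at h
    rw [hc, show (a + v) * c - (c * v - s) = c * a + s by ring] at h
    rw [h]
    ring
  obtain ⟨β, μ, ν, h⟩ := exists_affine_of_affine_along_lines ht.1 ht.2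
    (fun a y => (f.line (0, a, y)).2.2) hlines
  exact ⟨β, μ, ν, fun l => (f.thd_line_eq l.1 l.2.1 l.2.2).trans (h _ _)⟩

theorem pointSlope_point_of_affine {β μ ν : F}
    (hρ : ∀ l, (f.line l).2.2 = β * l.2.1 + μ * l.2.2 + ν) {p : F × F × F} (hp : p.1 ≠ 0) :
    pointSlope (f.point p).1 (f.point p).2.1 = μ * pointSlope p.1 p.2.1 + β := by
  have h₀ := f.thd_line_zero_eq hp 0
  have h₁ := f.thd_line_zero_eq hp 1
  rw [hρ] at h₀ h₁
  linear_combination h₀ - h₁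

theorem bijective_fst_point [Finite F] (a r : F) :
    Function.Bijective fun t => (f.point (t, -a, -r)).1 := by
  refine Finite.injective_iff_bijective.mp fun t t' h => ?_
  have hinc (t : F) : Incident (f.point (t, -a, -r)) (f.line (0, a, r)) :=
    f.incident (incident_neg_of_mul_eq_zero a r (mul_zero t))
  exact congrArg Prod.fst (f.point_injective ((hinc t).eq_of_fst_eq (hinc t') h))

theorem sum_comp_pointSlope_point [Fintype F] (g : F → F) (a r : F) :
    ∑ t, g (pointSlope (f.point (t, -a, -r)).1 (f.point (t, -a, -r)).2.1) =
      ∑ T, g (pointSlope T (T * (f.line (0, a, r)).1 - a)) := by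
  have hsnd (t : F) :
      (f.point (t, -a, -r)).2.1 = (f.point (t, -a, -r)).1 * (f.line (0, a, r)).1 - a := by
    have h := (f.incident (incident_neg_of_mul_eq_zero a r (mul_zero t))).snd
    rw [snd_line] at h
    linear_combination h
  simp_rw [hsnd]
  exact (f.bijective_fst_point a r).sum_comp fun T =>
    g (pointSlope T (T * (f.line (0, a, r)).1 - a))

variable [Fintype F]

theorem coeffs_eq_of_affine (hF : 4 < Fintype.card F) {β μ ν : F}
    (hρ : ∀ l, (f.line l).2.2 = β * l.2.1 + μ * l.2.2 + ν) : μ = 1 ∧ β = 0 := by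
  -- `∑ₜ pointSlope (f.point (t, -a, 0))` and `∑ₜ (μ * pointSlope t (-a) + β)` are both sums of
  -- cubics, hence `0`, and their summands differ only at `t = 0`
  have key (a : F) : (1 - μ) * a ^ 2 - β = 0 := by
    have hsum := f.sum_comp_pointSlope_point id a 0
    have hcubic := sum_pointSlope_pow_of_lt (f.line (0, a, 0)).1 a (j := 1) (by omega)
    simp only [id, pow_one] at hsum hcubic
    rw [hcubic] at hsum
    have h₀ : ∑ t : F, pointSlope t (-a) = 0 := by
      simpa using sum_pointSlope_pow_of_lt (j := 1) (0 : F) a (by omega)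
    have hdiff : ∑ t : F, (pointSlope (f.point (t, -a, -0)).1 (f.point (t, -a, -0)).2.1
        - (μ * pointSlope t (-a) + β)) = (1 - μ) * a ^ 2 - β := by
      rw [Fintype.sum_eq_single 0 fun t ht => by
        rw [f.pointSlope_point_of_affine hρ (p := (t, -a, -0)) ht]; ring]
      obtain ⟨h₁, h₂⟩ := f.point_of_fst_eq_zero (-a) (-0)
      simp only [h₁, h₂, pointSlope]
      ring
    rw [← hdiff, Finset.sum_sub_distrib, Finset.sum_add_distrib, ← Finset.mul_sum, h₀]
    simpa [FiniteField.cast_card_eq_zero] using hsum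
  have h₀ := key 0
  have h₁ := key 1
  exact ⟨by linear_combination h₀ - h₁, by linear_combination -h₀⟩

theorem exists_thd_line_eq_add (hF : 4 < Fintype.card F) :
    ∃ ν : F, ∀ l, (f.line l).2.2 = l.2.2 + ν := by
  obtain ⟨β, μ, ν, hρ⟩ := f.exists_thd_line_eq_affine hF
  obtain ⟨rfl, rfl⟩ := f.coeffs_eq_of_affine hF hρ
  exact ⟨ν, fun l => by rw [hρ]; ring⟩

theorem pointSlope_point (hF : 4 < Fintype.card F) (p : F × F × F) :
    pointSlope (f.point p).1 (f.point p).2.1 = pointSlope p.1 p.2.1 := by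
  obtain ⟨β, μ, ν, hρ⟩ := f.exists_thd_line_eq_affine hF
  obtain ⟨rfl, rfl⟩ := f.coeffs_eq_of_affine hF hρ
  obtain ⟨u, v, w⟩ := p
  rcases eq_or_ne u 0 with rfl | hu
  · obtain ⟨h₁, h₂⟩ := f.point_of_fst_eq_zero v w
    rw [h₁, h₂]
  · rw [f.pointSlope_point_of_affine hρ hu, one_mul, add_zero]

theorem fst_line_zero (hF : 4 < Fintype.card F) (h3 : Fintype.card F % 3 = 1) (a r : F) :
    (f.line (0, a, r)).1 = 0 := by
  obtain ⟨j, hj⟩ : ∃ j, 3 * j = Fintype.card F - 1 := ⟨(Fintype.card F - 1) / 3, by omega⟩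
  have hsum := f.sum_comp_pointSlope_point (· ^ j) a r
  simp only [f.pointSlope_point hF] at hsum
  have h₀ := sum_pointSlope_pow_of_eq (0 : F) a hj
  simp only [mul_zero, zero_sub] at h₀
  rw [h₀, sum_pointSlope_pow_of_eq _ _ hj, neg_inj, zero_pow (by omega)] at hsum
  exact (pow_eq_zero_iff (by omega)).mp hsum.symm

theorem snd_point (hF : 4 < Fintype.card F) (h3 : Fintype.card F % 3 = 1) (p : F × F × F) :
    (f.point p).2.1 = p.2.1 := by
  have h := (f.incident (p := p) (l := (0, -p.2.1, -p.2.2)) ⟨by simp, by simp⟩).snd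
  rw [snd_line, f.fst_line_zero hF h3, mul_zero] at h
  linear_combination h

theorem fst_line (hF : 4 < Fintype.card F) (h3 : Fintype.card F % 3 = 1) (l : F × F × F) :
    (f.line l).1 = l.1 := by
  obtain ⟨x, a, r⟩ := l
  rcases eq_or_ne x 0 with rfl | hx
  · exact f.fst_line_zero hF h3 a r
  classical
  obtain ⟨t, -, ht⟩ := Finset.exists_mem_notMem_of_card_lt_card
    (s := ({0, a / x, (a - 1) / x} : Finset F)) (t := Finset.univ)
    (Finset.card_le_three.trans_lt (by rw [Finset.card_univ]; omega))
  simp only [Finset.mem_insert, Finset.mem_singleton, not_or] at ht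
  obtain ⟨ht₀, hta, hta'⟩ := ht
  set p : F × F × F := (t, t * x - a, t * x * pointSlope t (t * x - a) - r)
  have h₂ : (f.point p).2.1 = t * x - a := f.snd_point hF h3 p
  -- `t ∉ {a / x, (a - 1) / x}` keeps `t x - a` off `0` and `-1`, where `pointSlope · v` is not
  -- injective
  have h₁ : (f.point p).1 = t := pointSlope_left_injective (v := t * x - a)
    (fun h => hta (by field_simp; linear_combination h))
    (fun h => hta' (by field_simp; linear_combination h))
    (by rw [← h₂, f.pointSlope_point hF, h₂])
  have h := (f.incident (p := p) (l := (x, a, r)) ⟨by ring, by ring⟩).snd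
  rw [h₁, h₂, snd_line] at h
  exact mul_left_cancel₀ ht₀ (by linear_combination -h)

theorem fst_point (hF : 4 < Fintype.card F) (h3 : Fintype.card F % 3 = 1) (p : F × F × F) :
    (f.point p).1 = p.1 := by
  have h := (f.incident (l := (1, p.1 - p.2.1, p.1 * pointSlope p.1 p.2.1 - p.2.2))
    ⟨by ring, by ring⟩).snd
  rw [snd_line, f.fst_line hF h3, f.snd_point hF h3] at h
  linear_combination -h

theorem exists_translation (hF : 4 < Fintype.card F) (h3 : Fintype.card F % 3 = 1) :
    ∃ b : F, (∀ p, f.point p = (p.1, p.2.1, p.2.2 + b)) ∧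
      ∀ l, f.line l = (l.1, l.2.1, l.2.2 - b) := by
  obtain ⟨ν, hν⟩ := f.exists_thd_line_eq_add hF
  refine ⟨-ν, fun p => Prod.ext (f.fst_point hF h3 p) (Prod.ext (f.snd_point hF h3 p) ?_),
    fun l => Prod.ext (f.fst_line hF h3 l) (Prod.ext (f.snd_line l) (by rw [hν]; ring))⟩
  have h := (f.incident (p := p) (l := (0, -p.2.1, -p.2.2)) ⟨by simp, by simp⟩).thd
  rw [hν, snd_line, f.snd_point hF h3] at h
  linear_combination h

end IncidenceMap

end RGraph

namespace RGraph.IncidenceMap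

variable {F : Type} [Field F] (φ : RGraph F ≃g RGraph F)

theorem exists_map_inl [Finite F] (hφ : ∀ l, ∃ l', φ (.inr l) = .inr l' ∧ l'.2.1 = l.2.1)
    (p : F × F × F) : ∃ P, φ (.inl p) = .inl P :=
  φ.toEquiv.exists_apply_inl_eq_inl (fun l => (hφ l).imp fun _ => And.left) p

variable [Finite F] (hφ : ∀ l, ∃ l', φ (.inr l) = .inr l' ∧ l'.2.1 = l.2.1)

noncomputable def ofIso : IncidenceMap F where
  point p := (exists_map_inl φ hφ p).choose
  line l := (hφ l).choose
  point_injective p p' h := Sum.inl_injective <| φ.injective <|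
    ((exists_map_inl φ hφ p).choose_spec.trans (congrArg Sum.inl h)).trans
      (exists_map_inl φ hφ p').choose_spec.symm
  line_injective l l' h := Sum.inr_injective <| φ.injective <|
    ((hφ l).choose_spec.1.trans (congrArg Sum.inr h)).trans (hφ l').choose_spec.1.symm
  snd_line l := (hφ l).choose_spec.2
  incident {p l} h := by
    have := φ.map_adj_iff.mpr (adj_inl_inr_iff.mpr h)
    rw [(exists_map_inl φ hφ p).choose_spec, (hφ l).choose_spec.1] at this
    exact adj_inl_inr_iff.mp this

theorem map_inl (p : F × F × F) : φ (.inl p) = .inl ((ofIso φ hφ).point p) :=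
  (exists_map_inl φ hφ p).choose_spec

theorem map_inr (l : F × F × F) : φ (.inr l) = .inr ((ofIso φ hφ).line l) :=
  (hφ l).choose_spec.1

end RGraph.IncidenceMap

theorem aut_is_translation_general (q p e : ℕ) (hodd : Odd p)
    (hq : q = p ^ e) (hmod : q % 3 = 1) (F : Type) [Field F] [Fintype F]
    (hcard : Fintype.card F = q) (φ : RGraph F ≃g RGraph F)
    (hlines : ∀ x a r : F, ∃ x' r' : F, φ (Sum.inr (x, a, r)) = Sum.inr (x', a, r')) :
    ∃ b : F,
      (∀ p1 p2 p3 : F, φ (Sum.inl (p1, p2, p3)) = Sum.inl (p1, p2, p3 + b)) ∧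
        (∀ l1 l2 l3 : F, φ (Sum.inr (l1, l2, l3)) = Sum.inr (l1, l2, l3 - b)) := by
  have hφ (l : F × F × F) : ∃ l', φ (.inr l) = .inr l' ∧ l'.2.1 = l.2.1 := by
    obtain ⟨x', r', h⟩ := hlines l.1 l.2.1 l.2.2
    exact ⟨(x', l.2.1, r'), h, rfl⟩
  have hF : 4 < Fintype.card F := by
    have := Fintype.one_lt_card (α := F)
    obtain ⟨k, hk⟩ := hq ▸ hodd.pow (n := e)
    omega
  obtain ⟨b, hpoint, hline⟩ :=
    (RGraph.IncidenceMap.ofIso φ hφ).exists_translation hF (hcard ▸ hmod)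
  exact ⟨b, fun p1 p2 p3 => by rw [RGraph.IncidenceMap.map_inl φ hφ, hpoint],
    fun l1 l2 l3 => by rw [RGraph.IncidenceMap.map_inr φ hφ, hline]⟩

/-- Let `q` be a power of an odd prime with `q ≡ 1 (mod 3)` and `F = 𝔽_q`, and let `φ` be an
automorphism of `R` that maps lines to lines with the second component of the image of every
line equal to its own second component. Then there exists `b ∈ F` such that `φ = t_b`, i.e.
`φ((p₁,p₂,p₃)) = (p₁,p₂,p₃+b)` for every point and `φ([ℓ₁,ℓ₂,ℓ₃]) = [ℓ₁,ℓ₂,ℓ₃−b]` for every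
line. -/
theorem aut_is_translation (q p e : ℕ) (hp : p.Prime) (hodd : Odd p) (he : 1 ≤ e)
    (hq : q = p ^ e) (hmod : q % 3 = 1) (F : Type) [Field F] [Fintype F]
    (hcard : Fintype.card F = q) (φ : RGraph F ≃g RGraph F)
    (hlines : ∀ x a r : F, ∃ x' r' : F, φ (Sum.inr (x, a, r)) = Sum.inr (x', a, r')) :
    ∃ b : F,
      (∀ p1 p2 p3 : F, φ (Sum.inl (p1, p2, p3)) = Sum.inl (p1, p2, p3 + b)) ∧
        (∀ l1 l2 l3 : F, φ (Sum.inr (l1, l2, l3)) = Sum.inr (l1, l2, l3 - b)) :=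
  aut_is_translation_general q p e hodd hq hmod F hcard φ hlines
end
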